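/- arXiv:2204.13186 — 4 statements merged into one kernel-verified Lean document; each statement's English description precedes it below -/
import Mathlib

section
/- Let Γ be a distance-biregular graph, ℓ ∈ {0,1}, and ℓ̄ = 1 − ℓ. If i, j ≥ 1, i + j is odd, and i + j ≤ D₀, then c_{ℓ,i} ≤ b_{ℓ̄,j} and c_{ℓ̄,i} ≤ b_{ℓ,j}. -/
open Finset SimpleGraph

/-!
Pick `x` in part `ℓ` and `z` with `d(x, z) = i + j` (possible since `D ℓ ≥ D₀ ≥ i + j`), and `y`
on a geodesic from `x` to `z` with `d(x, y) = j`, `d(y, z) = i`. Every neighbour of `y` one step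
closer to `z` is then one step farther from `x`, so `c_{σ z, i} ≤ b_{σ x, j}`; since `i + j` is
odd, `z` lies in the other part.
-/

lemma Fin.eq_one_sub_of_ne {a b : Fin 2} (h : a ≠ b) : b = 1 - a := by
  revert a b; decide

namespace SimpleGraph

variable {V : Type} {G : SimpleGraph V}

lemma Coloring.even_length_iff_eq (C : G.Coloring (Fin 2)) {u v : V} (p : G.Walk u v) :
    Even p.length ↔ C u = C v := by
  induction p with
  | nil => simp
  | @cons u v w h p ih =>
    have hne : C u ≠ C v := C.valid h
    rw [Walk.length_cons, Nat.even_add_one, ih, Fin.eq_one_sub_of_ne hne]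
    omega

lemma Coloring.even_dist_iff_eq (C : G.Coloring (Fin 2)) {u v : V} (h : G.Reachable u v) :
    Even (G.dist u v) ↔ C u = C v := by
  obtain ⟨p, hp⟩ := h.exists_walk_length_eq_dist
  rw [← hp, C.even_length_iff_eq]

lemma Reachable.exists_dist_eq_and_dist_eq_sub {u v : V} (h : G.Reachable u v) {s : ℕ}
    (hs : s ≤ G.dist u v) : ∃ w, G.dist u w = s ∧ G.dist w v = G.dist u v - s := by
  obtain ⟨p, hp⟩ := h.exists_walk_length_eq_dist
  refine ⟨p.getVert s, ?_, ?_⟩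
  · rw [← length_eq_dist_of_subwalk hp (p.isSubwalk_take s), Walk.take_length]
    omega
  · rw [← length_eq_dist_of_subwalk hp (p.isSubwalk_drop s), Walk.drop_length, hp]

lemma Connected.card_filter_adj_dist_pred_le [Fintype V] [DecidableRel G.Adj]
    (hconn : G.Connected) {x y z : V} {i j : ℕ} (hi : 1 ≤ i) (hxy : G.dist x y = j)
    (hzy : G.dist z y = i) (hxz : G.dist x z = i + j) :
    #{w | G.dist z w = i - 1 ∧ G.Adj y w} ≤ #{w | G.dist x w = j + 1 ∧ G.Adj y w} := by
  refine card_le_card fun w hw ↦ ?_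
  simp only [mem_filter, mem_univ, true_and] at hw ⊢
  refine ⟨?_, hw.2⟩
  have hxw := hconn.dist_triangle (u := x) (v := y) (w := w)
  have hxz' := hconn.dist_triangle (u := x) (v := w) (w := z)
  rw [dist_eq_one_iff_adj.mpr hw.2] at hxw
  rw [dist_comm (u := w)] at hxz'
  omega

end SimpleGraph

theorem stmt6_general {V : Type} [Fintype V]
    (G : SimpleGraph V) [DecidableRel G.Adj]
    (hconn : G.Connected)
    (σ : V → Fin 2)
    (hbip : ∀ x y : V, G.Adj x y → σ x ≠ σ y)
    (c b : Fin 2 → ℕ → ℕ)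
    (hc : ∀ (x y : V) (i : ℕ), G.dist x y = i →
      (Finset.univ.filter (fun z => G.dist x z = i - 1 ∧ G.Adj y z)).card = c (σ x) i)
    (hb : ∀ (x y : V) (i : ℕ), G.dist x y = i →
      (Finset.univ.filter (fun z => G.dist x z = i + 1 ∧ G.Adj y z)).card = b (σ x) i)
    (D : Fin 2 → ℕ)
    (hDmax : ∀ ℓ : Fin 2, ∃ x y : V, σ x = ℓ ∧ G.dist x y = D ℓ)
    (hD01 : D 0 ≤ D 1) :
    ∀ (ℓ : Fin 2) (i j : ℕ), 1 ≤ i → 1 ≤ j → Odd (i + j) → i + j ≤ D 0 →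
      c ℓ i ≤ b (1 - ℓ) j ∧ c (1 - ℓ) i ≤ b ℓ j := by
  intro ℓ i j hi _ hodd hij
  have hc_le_b : ∀ x z : V, G.dist x z = i + j → c (σ z) i ≤ b (σ x) j := by
    intro x z hxz
    obtain ⟨y, hxy, hyz⟩ := (hconn x z).exists_dist_eq_and_dist_eq_sub (s := j) (by omega)
    rw [dist_comm (u := y)] at hyz
    rw [← hc z y i (by omega), ← hb x y j hxy]
    exact hconn.card_filter_adj_dist_pred_le hi hxy (by omega) hxz
  have hD : ∀ m, D 0 ≤ D m := by
    intro m; fin_cases m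
    exacts [le_rfl, hD01]
  have key : ∀ m, c (1 - m) i ≤ b m j := by
    intro m
    obtain ⟨x, y, rfl, hxy⟩ := hDmax m
    obtain ⟨z, hxz, -⟩ := (hconn x y).exists_dist_eq_and_dist_eq_sub (s := i + j)
      (hxy ▸ hij.trans (hD _))
    let C : G.Coloring (Fin 2) := Coloring.mk σ fun h ↦ hbip _ _ h
    have hσ : σ x ≠ σ z := fun h ↦
      Nat.not_even_iff_odd.mpr (hxz ▸ hodd) ((C.even_dist_iff_eq (hconn x z)).mpr h)
    simpa [Fin.eq_one_sub_of_ne hσ] using hc_le_b x z hxz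
  exact ⟨by simpa using key (1 - ℓ), key ℓ⟩

theorem stmt6 {V : Type} [Fintype V] [DecidableEq V]
    (G : SimpleGraph V) [DecidableRel G.Adj]
    (hconn : G.Connected) (hcard : 2 ≤ Fintype.card V)
    (σ : V → Fin 2)
    (hbip : ∀ x y : V, G.Adj x y → σ x ≠ σ y)
    (k : Fin 2 → ℕ)
    (hdeg : ∀ x : V, G.degree x = k (σ x))
    (c b : Fin 2 → ℕ → ℕ)
    (hc : ∀ (x y : V) (i : ℕ), G.dist x y = i →
      (Finset.univ.filter (fun z => G.dist x z = i - 1 ∧ G.Adj y z)).card = c (σ x) i)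
    (hb : ∀ (x y : V) (i : ℕ), G.dist x y = i →
      (Finset.univ.filter (fun z => G.dist x z = i + 1 ∧ G.Adj y z)).card = b (σ x) i)
    (D : Fin 2 → ℕ)
    (hDub : ∀ x y : V, G.dist x y ≤ D (σ x))
    (hDmax : ∀ ℓ : Fin 2, ∃ x y : V, σ x = ℓ ∧ G.dist x y = D ℓ)
    (hD0 : 1 ≤ D 0) (hD01 : D 0 ≤ D 1) :
    ∀ (ℓ : Fin 2) (i j : ℕ), 1 ≤ i → 1 ≤ j → Odd (i + j) → i + j ≤ D 0 →
      c ℓ i ≤ b (1 - ℓ) j ∧ c (1 - ℓ) i ≤ b ℓ j :=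
  stmt6_general G hconn σ hbip c b hc hb D hDmax hD01
end

section
/- Let Γ be a distance-biregular graph, ℓ ∈ {0,1}, and x ∈ V_ℓ. Then for every vertex y ∈ V and every 0 ≤ m ≤ D_ℓ one has ν^x(y) = q_{ℓ,m} if and only if d(x,y) = m, where q_{ℓ,m} = Σ_{j=1}^{m} (n − B_{ℓ,j−1})/(k_{ℓ,j}·c_{ℓ,j}) = Σ_{j=0}^{m−1} (n − B_{ℓ,j})/(k_{ℓ,j}·b_{ℓ,j}). In particular q_{ℓ,1} = (n−1)/k_ℓ and q_{ℓ,2} = (n−1)/k_ℓ + (n−1−k_ℓ)/(k_ℓ(k_{ℓ̄}−1)). -/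
/-!
By the maximum principle on a connected graph, `ν^x` is the unique function vanishing at `x`
with `L ν^x = 1` off `x`. The intersection numbers at `x` make the radial function
`y ↦ q (d(x, y))` a solution as well: at distance `i ≥ 1` its Laplacian is
`c_i (q_i - q_{i-1}) - b_i (q_{i+1} - q_i)`, and double counting the edges between consecutive
spheres (`k_i b_i = k_{i+1} c_{i+1}`) turns `k_i` times this into
`(n - B_{i-1}) - (n - B_i) = k_i`. Hence `ν^x = q ∘ d(x, ·)`, and `q` is strictly increasing
up to the eccentricity `D_ℓ` of `x`, so `ν^x (y)` determines `d(x, y)`. The same edge count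
gives the second formula for `q`, and `c_1 = 1`, `b_1 = k_ℓ̄ - 1` give `q_1` and `q_2`.
-/

open Finset SimpleGraph

namespace SimpleGraph

variable {V : Type*} {G : SimpleGraph V}

lemma Walk.dist_getVert_of_length_eq_dist {x y : V} (p : G.Walk x y)
    (hp : p.length = G.dist x y) {i : ℕ} (hi : i ≤ p.length) :
    G.dist x (p.getVert i) = i := by
  have hx : G.dist x (p.getVert i) ≤ i := by simpa [hi] using dist_le (p.take i)
  have hy : G.dist (p.getVert i) y ≤ p.length - i := by simpa using dist_le (p.drop i)
  have := (p.take i).reachable.dist_triangle_left y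
  omega

lemma Reachable.exists_dist_eq_of_le {x y : V} (h : G.Reachable x y) {i : ℕ}
    (hi : i ≤ G.dist x y) : ∃ z, G.dist x z = i := by
  obtain ⟨p, hp⟩ := h.exists_walk_length_eq_dist
  exact ⟨p.getVert i, p.dist_getVert_of_length_eq_dist hp (hp ▸ hi)⟩

lemma Reachable.exists_adj_dist_eq_of_dist_eq_succ {x y : V} (h : G.Reachable x y) {i : ℕ}
    (hi : G.dist x y = i + 1) : ∃ z, G.Adj y z ∧ G.dist x z = i := by
  obtain ⟨p, hp⟩ := h.exists_walk_length_eq_dist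
  refine ⟨p.getVert i, ?_, p.dist_getVert_of_length_eq_dist hp (by omega)⟩
  simpa [← hp ▸ hi, p.getVert_length] using (p.adj_getVert_succ (i := i) (by omega)).symm

lemma Coloring.dist_ne_of_adj (C : G.Coloring Bool) {x y z : V} (hxy : G.Reachable x y)
    (hyz : G.Adj y z) : G.dist x y ≠ G.dist x z := by
  obtain ⟨p, hp⟩ := hxy.exists_walk_length_eq_dist
  obtain ⟨p', hp'⟩ := (hxy.trans hyz.reachable).exists_walk_length_eq_dist
  intro h
  have hvalid := C.valid hyz
  have hparity := C.even_length_iff_congr p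
  rw [hp, h, ← hp', C.even_length_iff_congr p'] at hparity
  cases hx : C x <;> cases hy : C y <;> cases hz : C z <;> simp_all

lemma Coloring.dist_eq_add_one_or_of_adj (C : G.Coloring Bool) {x y z : V}
    (hxy : G.Reachable x y) (hyz : G.Adj y z) :
    G.dist x z = G.dist x y + 1 ∨ G.dist x z = G.dist x y - 1 := by
  have := C.dist_ne_of_adj hxy hyz
  rcases hyz.diff_dist_adj (u := x) with h | h | h <;> omega

section Dirichlet

variable [Fintype V] [DecidableRel G.Adj]

lemma Connected.apply_le_of_harmonic_off (hconn : G.Connected) {x : V} {g : V → ℝ}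
    (hg : ∀ y ≠ x, (G.degree y : ℝ) * g y = ∑ z ∈ G.neighborFinset y, g z) (y : V) :
    g y ≤ g x := by
  have : Nonempty V := ⟨x⟩
  obtain ⟨y₀, hy₀⟩ := Finite.exists_max g
  -- a maximum off `x` propagates to all neighbours, hence along a walk until it reaches `x`
  have spread : ∀ a ≠ x, g a = g y₀ → ∀ z ∈ G.neighborFinset a, g z = g y₀ := by
    intro a ha hmax
    refine (sum_eq_sum_iff_of_le fun z _ => hy₀ z).1 ?_
    rw [← hg a ha, sum_const, card_neighborFinset_eq_degree, nsmul_eq_mul, hmax]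
  have reach : ∀ a b, G.Walk a b → g a = g y₀ → g b = g y₀ ∨ g x = g y₀ := by
    intro a b p
    induction p with
    | nil => exact Or.inl
    | @cons a c _ hac p ih =>
      intro ha
      by_cases hax : a = x
      · exact Or.inr (hax ▸ ha)
      · exact ih (spread a hax ha c ((G.mem_neighborFinset a c).2 hac))
  rw [(reach y₀ x (hconn y₀ x).some rfl).elim id id]
  exact hy₀ y

lemma Connected.eq_of_laplacian_eq_off (hconn : G.Connected) {x : V} {f g : V → ℝ}
    (hfg : ∀ y ≠ x, (G.degree y : ℝ) * f y - ∑ z ∈ G.neighborFinset y, f z =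
      (G.degree y : ℝ) * g y - ∑ z ∈ G.neighborFinset y, g z)
    (hx : f x = g x) : f = g := by
  have harmonic : ∀ u v : V → ℝ,
      (∀ y ≠ x, (G.degree y : ℝ) * u y - ∑ z ∈ G.neighborFinset y, u z =
        (G.degree y : ℝ) * v y - ∑ z ∈ G.neighborFinset y, v z) →
      ∀ y ≠ x, (G.degree y : ℝ) * (u - v) y = ∑ z ∈ G.neighborFinset y, (u - v) z := by
    intro u v huv y hy
    simp only [Pi.sub_apply, sum_sub_distrib]
    linarith [huv y hy]
  funext y
  have hfg' := hconn.apply_le_of_harmonic_off (harmonic f g hfg) y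
  have hgf := hconn.apply_le_of_harmonic_off (harmonic g f fun y hy => (hfg y hy).symm) y
  simp only [Pi.sub_apply, hx] at hfg' hgf
  linarith

end Dirichlet

/-- The paper's `q_m`; the inner sum is the ball size `B_{j-1}`. -/
noncomputable def radialPotential (n : ℕ) (kk c : ℕ → ℕ) (m : ℕ) : ℝ :=
  ∑ j ∈ Icc 1 m, ((n : ℝ) - ∑ t ∈ range j, (kk t : ℝ)) / ((kk j : ℝ) * (c j : ℝ))

@[simp]
lemma radialPotential_zero (n : ℕ) (kk c : ℕ → ℕ) : radialPotential n kk c 0 = 0 := by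
  simp [radialPotential]

lemma radialPotential_succ (n : ℕ) (kk c : ℕ → ℕ) (m : ℕ) :
    radialPotential n kk c (m + 1) = radialPotential n kk c m +
      ((n : ℝ) - ∑ t ∈ range (m + 1), (kk t : ℝ)) /
        ((kk (m + 1) : ℝ) * (c (m + 1) : ℝ)) := by
  rw [radialPotential, radialPotential, sum_Icc_succ_top (by omega)]

lemma sum_range_card_filter_dist_eq [Fintype V] (x : V) (j : ℕ) :
    ∑ t ∈ range j, #{y | G.dist x y = t} = #{y | G.dist x y < j} := by
  rw [card_eq_sum_card_fiberwise (f := G.dist x) (t := range j) fun y hy => by simpa using hy]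
  refine sum_congr rfl fun t ht => congrArg card ?_
  ext y
  simp only [mem_filter, mem_univ, true_and, mem_range] at ht ⊢
  omega

section IntersectionNumbers

variable [Fintype V] {x : V} {kk c b : ℕ → ℕ} (C : G.Coloring Bool) (hconn : G.Connected)
  (hkk : ∀ i, #{y | G.dist x y = i} = kk i)

include hconn hkk in
lemma sum_range_eq_card_of_eq_zero {j : ℕ} (hj : kk j = 0) :
    ∑ t ∈ range j, kk t = Fintype.card V := by
  simp_rw [← hkk, sum_range_card_filter_dist_eq, ← card_univ]
  congr 1
  refine filter_true_of_mem fun y _ => not_le.1 fun hle => ?_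
  obtain ⟨z, hz⟩ := (hconn x y).exists_dist_eq_of_le hle
  rw [← hkk j, card_eq_zero] at hj
  exact (eq_empty_iff_forall_notMem.1 hj) z (by simpa using hz)

include hconn hkk in
lemma kk_zero : kk 0 = 1 := by
  rw [← hkk, card_eq_one]
  exact ⟨x, by ext; simp [hconn.dist_eq_zero_iff, eq_comm]⟩

variable [DecidableRel G.Adj]
  (hc : ∀ y i, G.dist x y = i → #{z | G.dist x z = i - 1 ∧ G.Adj y z} = c i)
  (hb : ∀ y i, G.dist x y = i → #{z | G.dist x z = i + 1 ∧ G.Adj y z} = b i)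

include hkk in
lemma kk_one : kk 1 = G.degree x := by
  rw [← hkk, ← card_neighborFinset_eq_degree]
  congr 1
  ext
  simp

include hconn hc in
lemma c_one {y : V} (hxy : G.Adj x y) : c 1 = 1 := by
  rw [← hc y 1 (dist_eq_one_iff_adj.2 hxy), card_eq_one]
  refine ⟨x, ext fun z => ?_⟩
  simp only [mem_filter, mem_univ, true_and, mem_singleton, Nat.sub_self, hconn.dist_eq_zero_iff]
  exact ⟨fun h => h.1.symm, fun h => ⟨h.symm, h ▸ hxy.symm⟩⟩

include hconn hc in
lemma c_pos_of_dist_eq {y : V} {i : ℕ} (hy : G.dist x y = i + 1) : 0 < c (i + 1) := by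
  obtain ⟨z, hyz, hz⟩ := (hconn x y).exists_adj_dist_eq_of_dist_eq_succ hy
  rw [← hc y (i + 1) hy]
  exact card_pos.2 ⟨z, by simpa [hz] using hyz⟩

include hkk hc hb in
lemma kk_mul_b_eq (i : ℕ) : kk i * b i = kk (i + 1) * c (i + 1) := by
  calc kk i * b i
      = ∑ y ∈ {y | G.dist x y = i},
          #(({z | G.dist x z = i + 1} : Finset V).bipartiteAbove G.Adj y) := by
        rw [sum_const_nat fun y hy => ?_, hkk]
        rw [bipartiteAbove, filter_filter]
        exact hb y i (mem_filter.1 hy).2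
    _ = ∑ z ∈ {z | G.dist x z = i + 1},
          #(({y | G.dist x y = i} : Finset V).bipartiteBelow G.Adj z) :=
        sum_card_bipartiteAbove_eq_sum_card_bipartiteBelow _
    _ = kk (i + 1) * c (i + 1) := by
        rw [sum_const_nat fun z hz => ?_, hkk]
        rw [bipartiteBelow, filter_filter, ← hc z (i + 1) (mem_filter.1 hz).2, Nat.add_sub_cancel]
        simp_rw [adj_comm]

/- If `kk (j + 1) * c (j + 1) = 0` then the sphere of radius `j + 1` is empty, so the ball of
radius `j` is the whole graph and both sides vanish. -/
include hconn hkk hc in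
lemma mul_radialPotential_succ_sub (j : ℕ) :
    (kk (j + 1) * c (j + 1) : ℝ) *
        (radialPotential (Fintype.card V) kk c (j + 1) - radialPotential (Fintype.card V) kk c j) =
      Fintype.card V - ∑ t ∈ range (j + 1), (kk t : ℝ) := by
  rw [radialPotential_succ, add_sub_cancel_left]
  by_cases hj : kk (j + 1) = 0
  · rw [← Nat.cast_sum, sum_range_eq_card_of_eq_zero hconn hkk hj, hj]
    simp
  · obtain ⟨y, hy⟩ := card_pos.1 (Nat.pos_of_ne_zero (hkk (j + 1) ▸ hj))
    have := c_pos_of_dist_eq hconn hc (by simpa using hy)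
    field_simp

include C hconn hc hb in
lemma sum_neighborFinset_comp_dist (f : ℕ → ℝ) (y : V) :
    ∑ z ∈ G.neighborFinset y, f (G.dist x z) =
      c (G.dist x y) * f (G.dist x y - 1) + b (G.dist x y) * f (G.dist x y + 1) := by
  set i := G.dist x y
  have hdisj : Disjoint ({z | G.dist x z = i - 1 ∧ G.Adj y z} : Finset V)
      ({z | G.dist x z = i + 1 ∧ G.Adj y z} : Finset V) :=
    disjoint_filter.2 fun z _ h h' => by omega
  have hsplit : G.neighborFinset y = disjUnion _ _ hdisj := by
    ext z
    simp only [mem_neighborFinset, mem_disjUnion, mem_filter, mem_univ, true_and]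
    constructor
    · intro hyz
      rcases C.dist_eq_add_one_or_of_adj (hconn x y) hyz with h | h
      exacts [Or.inr ⟨h, hyz⟩, Or.inl ⟨h, hyz⟩]
    · rintro (⟨-, hyz⟩ | ⟨-, hyz⟩) <;> exact hyz
  rw [hsplit, sum_disjUnion, sum_eq_card_nsmul fun z hz => by rw [(mem_filter.1 hz).2.1],
    sum_eq_card_nsmul fun z hz => by rw [(mem_filter.1 hz).2.1], hc y i rfl, hb y i rfl,
    nsmul_eq_mul, nsmul_eq_mul]

include C hconn hc hb in
lemma degree_eq_c_add_b (y : V) : G.degree y = c (G.dist x y) + b (G.dist x y) := by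
  have := sum_neighborFinset_comp_dist C hconn hc hb (fun _ => 1) y
  simp only [sum_const, card_neighborFinset_eq_degree, nsmul_eq_mul, mul_one] at this
  exact_mod_cast this

include C hconn hkk hc hb in
lemma degree_mul_radialPotential_sub_sum {y : V} (hy : y ≠ x) :
    (G.degree y : ℝ) * radialPotential (Fintype.card V) kk c (G.dist x y) -
      ∑ z ∈ G.neighborFinset y, radialPotential (Fintype.card V) kk c (G.dist x z) = 1 := by
  obtain ⟨j, hj⟩ : ∃ j, G.dist x y = j + 1 :=
    Nat.exists_eq_add_one.2 ((hconn x y).pos_dist_of_ne hy.symm)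
  have hkpos : (0 : ℝ) < kk (j + 1) := by
    rw [← hkk]
    exact_mod_cast card_pos.2 ⟨y, by simpa using hj⟩
  have inner := mul_radialPotential_succ_sub hconn hkk hc j
  have outer := mul_radialPotential_succ_sub hconn hkk hc (j + 1)
  have edges : (kk (j + 1) * b (j + 1) : ℝ) = kk (j + 2) * c (j + 2) := by
    exact_mod_cast kk_mul_b_eq hkk hc hb (j + 1)
  rw [← edges, sum_range_succ] at outer
  rw [sum_neighborFinset_comp_dist C hconn hc hb, degree_eq_c_add_b C hconn hc hb, hj,
    Nat.add_sub_cancel]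
  push_cast
  refine mul_left_cancel₀ hkpos.ne' ?_
  linear_combination inner - outer

include hconn hkk hc in
lemma strictMonoOn_radialPotential (y : V) :
    StrictMonoOn (radialPotential (Fintype.card V) kk c) (Set.Iic (G.dist x y)) := by
  refine strictMonoOn_Iic_of_lt_succ fun m hm => ?_
  obtain ⟨z, hz⟩ := (hconn x y).exists_dist_eq_of_le (Order.add_one_le_of_lt hm)
  have hkpos : 0 < kk (m + 1) := hkk (m + 1) ▸ card_pos.2 ⟨z, by simpa using hz⟩
  have hcpos := c_pos_of_dist_eq hconn hc hz
  have hball : ∑ t ∈ range (m + 1), kk t < Fintype.card V := by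
    simp_rw [← hkk, sum_range_card_filter_dist_eq, ← card_univ]
    exact card_lt_card (filter_ssubset.2 ⟨z, mem_univ z, by simp [hz]⟩)
  rw [Order.succ_eq_add_one, ← sub_pos]
  refine pos_of_mul_pos_right (a := (kk (m + 1) * c (m + 1) : ℝ)) ?_ (by positivity)
  rw [mul_radialPotential_succ_sub hconn hkk hc m, ← Nat.cast_sum, sub_pos]
  exact_mod_cast hball

include hkk hc hb in
lemma radialPotential_eq_sum_b (m : ℕ) :
    radialPotential (Fintype.card V) kk c m = ∑ j ∈ range m,
      ((Fintype.card V : ℝ) - ∑ t ∈ range (j + 1), (kk t : ℝ)) /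
        ((kk j : ℝ) * (b j : ℝ)) := by
  induction m with
  | zero => simp
  | succ m ih =>
    have hedge : (kk m * b m : ℝ) = kk (m + 1) * c (m + 1) := by
      exact_mod_cast kk_mul_b_eq hkk hc hb m
    rw [radialPotential_succ, ih, ← hedge]
    exact (sum_range_succ _ m).symm

include hconn hkk hc in
lemma radialPotential_one {y : V} (hxy : G.Adj x y) :
    radialPotential (Fintype.card V) kk c 1 = ((Fintype.card V : ℝ) - 1) / G.degree x := by
  rw [radialPotential_succ, radialPotential_zero, zero_add, sum_range_one, kk_zero hconn hkk,
    kk_one hkk, c_one hconn hc hxy]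
  simp

include C hconn hkk hc hb in
lemma radialPotential_two {y : V} (hxy : G.Adj x y) :
    radialPotential (Fintype.card V) kk c 2 = ((Fintype.card V : ℝ) - 1) / G.degree x +
      ((Fintype.card V : ℝ) - 1 - G.degree x) / (G.degree x * ((G.degree y : ℝ) - 1)) := by
  have hdeg : G.degree y = 1 + b 1 := by
    rw [degree_eq_c_add_b C hconn hc hb y, dist_eq_one_iff_adj.2 hxy, c_one hconn hc hxy]
  have hedge : (G.degree x * b 1 : ℝ) = kk (1 + 1) * c (1 + 1) := by
    exact_mod_cast kk_one hkk ▸ kk_mul_b_eq hkk hc hb 1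
  rw [radialPotential_succ, radialPotential_one hconn hkk hc hxy, sum_range_succ, sum_range_one,
    kk_zero hconn hkk, kk_one hkk, ← hedge, hdeg]
  push_cast
  ring

end IntersectionNumbers

end SimpleGraph

theorem stmt8_general {V : Type} [Fintype V]
    (G : SimpleGraph V) [DecidableRel G.Adj]
    (hconn : G.Connected) (hcard : 2 ≤ Fintype.card V)
    (σ : V → Fin 2)
    (hbip : ∀ x y : V, G.Adj x y → σ x ≠ σ y)
    (k : Fin 2 → ℕ)
    (hdeg : ∀ x : V, G.degree x = k (σ x))
    (c b : Fin 2 → ℕ → ℕ)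
    (hc : ∀ (x y : V) (i : ℕ), G.dist x y = i →
      (Finset.univ.filter (fun z => G.dist x z = i - 1 ∧ G.Adj y z)).card = c (σ x) i)
    (hb : ∀ (x y : V) (i : ℕ), G.dist x y = i →
      (Finset.univ.filter (fun z => G.dist x z = i + 1 ∧ G.Adj y z)).card = b (σ x) i)
    (D : Fin 2 → ℕ)
    (hDub : ∀ x y : V, G.dist x y ≤ D (σ x))
    (hDmax : ∀ ℓ : Fin 2, ∃ x y : V, σ x = ℓ ∧ G.dist x y = D ℓ)
    (kk : Fin 2 → ℕ → ℕ)
    (hkk : ∀ (x : V) (i : ℕ),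
      (Finset.univ.filter (fun y => G.dist x y = i)).card = kk (σ x) i)
    (ν : V → V → ℝ)
    (hν0 : ∀ x : V, ν x x = 0)
    (hνL : ∀ x y : V, y ≠ x →
      (G.degree y : ℝ) * ν x y - ∑ z ∈ G.neighborFinset y, ν x z = 1)
    (q : Fin 2 → ℕ → ℝ)
    (hq : ∀ (ℓ : Fin 2) (m : ℕ), q ℓ m = ∑ j ∈ Finset.Icc 1 m,
      ((Fintype.card V : ℝ) - ∑ t ∈ Finset.range j, (kk ℓ t : ℝ)) /
        ((kk ℓ j : ℝ) * (c ℓ j : ℝ))) :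
    (∀ (x y : V) (m : ℕ), m ≤ D (σ x) →
      (ν x y = q (σ x) m ↔ G.dist x y = m)) ∧
    (∀ (ℓ : Fin 2) (m : ℕ), m ≤ D ℓ → q ℓ m = ∑ j ∈ Finset.range m,
      ((Fintype.card V : ℝ) - ∑ t ∈ Finset.range (j + 1), (kk ℓ t : ℝ)) /
        ((kk ℓ j : ℝ) * (b ℓ j : ℝ))) ∧
    (∀ ℓ : Fin 2, q ℓ 1 = ((Fintype.card V : ℝ) - 1) / (k ℓ : ℝ)) ∧
    (∀ ℓ : Fin 2, q ℓ 2 = ((Fintype.card V : ℝ) - 1) / (k ℓ : ℝ) +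
      ((Fintype.card V : ℝ) - 1 - (k ℓ : ℝ)) / ((k ℓ : ℝ) * ((k (1 - ℓ) : ℝ) - 1))) := by
  obtain rfl : q = fun ℓ => radialPotential (Fintype.card V) (kk ℓ) (c ℓ) := by
    funext ℓ m
    exact hq ℓ m
  let C : G.Coloring Bool := Coloring.mk (fun v => σ v = 0) fun {u v} huv => by
    have := hbip u v huv
    simp only [ne_eq, decide_eq_decide]
    omega
  have : Nontrivial V := Fintype.one_lt_card_iff_nontrivial.1 hcard
  have hnbr : ∀ x, ∃ y, G.Adj x y := fun x =>
    (G.degree_pos_iff_exists_adj x).1 (hconn.preconnected.degree_pos_of_nontrivial x)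
  have hν : ∀ x,
      ν x = fun y => radialPotential (Fintype.card V) (kk (σ x)) (c (σ x)) (G.dist x y) :=
    fun x => hconn.eq_of_laplacian_eq_off (fun y hy => by
      rw [hνL x y hy, degree_mul_radialPotential_sub_sum C hconn (hkk x) (hc x) (hb x) hy])
      (by simp [hν0])
  refine ⟨fun x y m hm => ?_, fun ℓ m _ => ?_, fun ℓ => ?_, fun ℓ => ?_⟩
  · obtain ⟨x', y', hσ, hdist⟩ := hDmax (σ x)
    have hmono := strictMonoOn_radialPotential hconn (hkk x') (hc x') y'
    rw [hσ, hdist] at hmono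
    rw [hν]
    exact hmono.injOn.eq_iff (hDub x y) hm
  · obtain ⟨x, -, rfl, -⟩ := hDmax ℓ
    exact radialPotential_eq_sum_b (hkk x) (hc x) (hb x) m
  · obtain ⟨x, -, rfl, -⟩ := hDmax ℓ
    obtain ⟨y, hxy⟩ := hnbr x
    rw [← hdeg x]
    exact radialPotential_one hconn (hkk x) (hc x) hxy
  · obtain ⟨x, -, rfl, -⟩ := hDmax ℓ
    obtain ⟨y, hxy⟩ := hnbr x
    have hσy : σ y = 1 - σ x := by
      have := hbip x y hxy
      omega
    rw [← hdeg x, ← hσy, ← hdeg y]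
    exact radialPotential_two C hconn (hkk x) (hc x) (hb x) hxy

theorem stmt8 {V : Type} [Fintype V] [DecidableEq V]
    (G : SimpleGraph V) [DecidableRel G.Adj]
    (hconn : G.Connected) (hcard : 2 ≤ Fintype.card V)
    (σ : V → Fin 2)
    (hbip : ∀ x y : V, G.Adj x y → σ x ≠ σ y)
    (k : Fin 2 → ℕ)
    (hdeg : ∀ x : V, G.degree x = k (σ x))
    (c b : Fin 2 → ℕ → ℕ)
    (hc : ∀ (x y : V) (i : ℕ), G.dist x y = i →
      (Finset.univ.filter (fun z => G.dist x z = i - 1 ∧ G.Adj y z)).card = c (σ x) i)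
    (hb : ∀ (x y : V) (i : ℕ), G.dist x y = i →
      (Finset.univ.filter (fun z => G.dist x z = i + 1 ∧ G.Adj y z)).card = b (σ x) i)
    (D : Fin 2 → ℕ)
    (hDub : ∀ x y : V, G.dist x y ≤ D (σ x))
    (hDmax : ∀ ℓ : Fin 2, ∃ x y : V, σ x = ℓ ∧ G.dist x y = D ℓ)
    (hD0 : 1 ≤ D 0) (hD01 : D 0 ≤ D 1)
    (kk : Fin 2 → ℕ → ℕ)
    (hkk : ∀ (x : V) (i : ℕ),
      (Finset.univ.filter (fun y => G.dist x y = i)).card = kk (σ x) i)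
    (ν : V → V → ℝ)
    (hν0 : ∀ x : V, ν x x = 0)
    (hνL : ∀ x y : V, y ≠ x →
      (G.degree y : ℝ) * ν x y - ∑ z ∈ G.neighborFinset y, ν x z = 1)
    (q : Fin 2 → ℕ → ℝ)
    (hq : ∀ (ℓ : Fin 2) (m : ℕ), q ℓ m = ∑ j ∈ Finset.Icc 1 m,
      ((Fintype.card V : ℝ) - ∑ t ∈ Finset.range j, (kk ℓ t : ℝ)) /
        ((kk ℓ j : ℝ) * (c ℓ j : ℝ))) :
    (∀ (x y : V) (m : ℕ), m ≤ D (σ x) →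
      (ν x y = q (σ x) m ↔ G.dist x y = m)) ∧
    (∀ (ℓ : Fin 2) (m : ℕ), m ≤ D ℓ → q ℓ m = ∑ j ∈ Finset.range m,
      ((Fintype.card V : ℝ) - ∑ t ∈ Finset.range (j + 1), (kk ℓ t : ℝ)) /
        ((kk ℓ j : ℝ) * (b ℓ j : ℝ))) ∧
    (∀ ℓ : Fin 2, q ℓ 1 = ((Fintype.card V : ℝ) - 1) / (k ℓ : ℝ)) ∧
    (∀ ℓ : Fin 2, q ℓ 2 = ((Fintype.card V : ℝ) - 1) / (k ℓ : ℝ) +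
      ((Fintype.card V : ℝ) - 1 - (k ℓ : ℝ)) / ((k ℓ : ℝ) * ((k (1 - ℓ) : ℝ) - 1))) :=
  stmt8_general G hconn hcard σ hbip k hdeg c b hc hb D hDub hDmax kk hkk ν hν0 hνL q hq
end

section
/- Let Γ be a distance-biregular graph, y ∈ V_ℓ and x ∈ V_{ℓ̂} with ℓ, ℓ̂ ∈ {0,1}. Then the effective resistance R(x,y) = (ν^x(y) + ν^y(x))/n satisfies R(x,y) = (2/n)·q_{ℓ,d(x,y)} + ((n−1)/n)·(1/k_{ℓ̂} − 1/k_ℓ). -/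
open Finset SimpleGraph

set_option linter.unusedSectionVars false
set_option linter.unusedVariables false

section helpers
variable {V : Type} [Fintype V] [DecidableEq V] {G : SimpleGraph V} [DecidableRel G.Adj]

private lemma swapsum (f : V → V → ℝ) :
    ∑ y, ∑ z ∈ G.neighborFinset y, f y z = ∑ z, ∑ y ∈ G.neighborFinset z, f y z := by
  have h1 : ∀ y : V, ∑ z ∈ G.neighborFinset y, f y z
      = ∑ z, if G.Adj y z then f y z else 0 := by
    intro y
    rw [SimpleGraph.neighborFinset_eq_filter, Finset.sum_filter]
  have h2 : ∀ z : V, ∑ y ∈ G.neighborFinset z, f y z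
      = ∑ y, if G.Adj y z then f y z else 0 := by
    intro z
    rw [SimpleGraph.neighborFinset_eq_filter, Finset.sum_filter]
    exact Finset.sum_congr rfl fun y _ => by simp only [G.adj_comm z y]
  simp only [h1, h2]
  exact Finset.sum_comm

private lemma lapsum (w : V → ℝ) :
    ∑ y, ((G.degree y : ℝ) * w y - ∑ z ∈ G.neighborFinset y, w z) = 0 := by
  rw [Finset.sum_sub_distrib, swapsum (G := G) (fun _ z => w z)]
  have h : ∀ z : V, ∑ _y ∈ G.neighborFinset z, w z = (G.degree z : ℝ) * w z := by
    intro z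
    rw [Finset.sum_const, SimpleGraph.card_neighborFinset_eq_degree, nsmul_eq_mul]
  simp only [h]
  ring

private lemma lapsym (u v : V → ℝ) :
    ∑ y, u y * ((G.degree y : ℝ) * v y - ∑ z ∈ G.neighborFinset y, v z)
      = ∑ y, v y * ((G.degree y : ℝ) * u y - ∑ z ∈ G.neighborFinset y, u z) := by
  simp only [mul_sub, Finset.mul_sum]
  rw [Finset.sum_sub_distrib, Finset.sum_sub_distrib]
  congr 1
  · exact Finset.sum_congr rfl fun y _ => by ring
  · rw [swapsum (G := G) (fun y z => u y * v z)]
    exact Finset.sum_congr rfl fun z _ => Finset.sum_congr rfl fun y _ => by ring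

private lemma harmonic_eq (hconn : G.Connected) (w : V → ℝ)
    (hw : ∀ y : V, (G.degree y : ℝ) * w y - ∑ z ∈ G.neighborFinset y, w z = 0) :
    ∀ a b₀ : V, w a = w b₀ := by
  intro a b₀
  obtain ⟨y₀, -, hy₀⟩ := Finset.exists_max_image Finset.univ w ⟨a, Finset.mem_univ a⟩
  have step : ∀ y : V, w y = w y₀ → ∀ z ∈ G.neighborFinset y, w z = w y₀ := by
    intro y hy z hz
    have h0 : ∑ z ∈ G.neighborFinset y, (w y₀ - w z) = 0 := by
      rw [Finset.sum_sub_distrib, Finset.sum_const, SimpleGraph.card_neighborFinset_eq_degree,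
        nsmul_eq_mul]
      have := hw y
      rw [hy] at this
      linarith
    have hnn : ∀ z ∈ G.neighborFinset y, 0 ≤ w y₀ - w z := fun z _ =>
      sub_nonneg.mpr (hy₀ z (Finset.mem_univ z))
    have := (Finset.sum_eq_zero_iff_of_nonneg hnn).mp h0 z hz
    linarith
  have reach : ∀ (u z : V) (_p : G.Walk u z), w u = w y₀ → w z = w y₀ := by
    intro u z p
    induction p with
    | nil => exact id
    | cons h p ih =>
      intro hu
      exact ih (step _ hu _ ((SimpleGraph.mem_neighborFinset _ _ _).mpr h))
  have ha : w a = w y₀ := (hconn y₀ a).elim fun p => reach _ _ p rfl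
  have hb : w b₀ = w y₀ := (hconn y₀ b₀).elim fun p => reach _ _ p rfl
  rw [ha, hb]

private lemma fin2_aux1 : ∀ A B C : Fin 2, A ≠ B → (A = C ↔ ¬ B = C) := by decide
private lemma fin2_aux2 : ∀ A B C : Fin 2, (A = B ↔ A = C) → B = C := by decide
private lemma fin2_aux3 : ∀ A B C : Fin 2, A ≠ B → A ≠ C → B = C := by decide

private lemma walk_parity (σ : V → Fin 2) (hbip : ∀ x y : V, G.Adj x y → σ x ≠ σ y) :
    ∀ {u v : V} (p : G.Walk u v), (σ u = σ v ↔ Even p.length) := by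
  intro u v p
  induction p with
  | nil => simp
  | @cons u b v h p ih =>
    rw [SimpleGraph.Walk.length_cons, Nat.even_add_one, ← ih]
    exact fin2_aux1 _ _ _ (hbip _ _ h)

end helpers

section helpers2
variable {V : Type} [Fintype V] [DecidableEq V] {G : SimpleGraph V} [DecidableRel G.Adj]

private lemma adj_dist_step (hconn : G.Connected) (σ : V → Fin 2)
    (hbip : ∀ x y : V, G.Adj x y → σ x ≠ σ y) (x : V) :
    ∀ y z : V, G.Adj y z →
      G.dist x z = G.dist x y + 1 ∨ G.dist x y = G.dist x z + 1 := by
  have hpar : ∀ z : V, (σ x = σ z ↔ Even (G.dist x z)) := by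
    intro z
    obtain ⟨p, hp⟩ := hconn.exists_walk_length_eq_dist x z
    have := walk_parity σ hbip p
    rwa [hp] at this
  intro y z hyz
  have h1 : G.dist x z ≤ G.dist x y + 1 := by
    calc G.dist x z ≤ G.dist x y + G.dist y z := hconn.dist_triangle
    _ = G.dist x y + 1 := by rw [SimpleGraph.dist_eq_one_iff_adj.mpr hyz]
  have h2 : G.dist x y ≤ G.dist x z + 1 := by
    calc G.dist x y ≤ G.dist x z + G.dist z y := hconn.dist_triangle
    _ = G.dist x z + 1 := by rw [SimpleGraph.dist_eq_one_iff_adj.mpr hyz.symm]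
  have hne : G.dist x y ≠ G.dist x z := by
    intro h
    have : σ x = σ y ↔ σ x = σ z := by rw [hpar, hpar, h]
    exact hbip y z hyz (fin2_aux2 _ _ _ this)
  omega

private lemma exists_pred (hconn : G.Connected) (x : V) :
    ∀ z : V, z ≠ x → ∃ w : V, G.Adj z w ∧ G.dist x w + 1 = G.dist x z := by
  intro z hz
  have hd : 0 < G.dist x z := hconn.pos_dist_of_ne (Ne.symm hz)
  obtain ⟨p, hp⟩ := hconn.exists_walk_length_eq_dist z x
  rw [SimpleGraph.dist_comm] at hp
  cases p with
  | nil => exact absurd rfl hz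
  | @cons _ w _ h q =>
    refine ⟨w, h, ?_⟩
    rw [SimpleGraph.Walk.length_cons] at hp
    have hle : G.dist x w ≤ q.length := by
      rw [SimpleGraph.dist_comm]; exact SimpleGraph.dist_le q
    rw [← hp] at hd ⊢
    have hge : G.dist x z ≤ G.dist x w + 1 := by
      calc G.dist x z ≤ G.dist x w + G.dist w z := hconn.dist_triangle
      _ = G.dist x w + 1 := by rw [SimpleGraph.dist_eq_one_iff_adj.mpr h.symm]
    rw [← hp] at hge
    omega

private lemma dist_lt_card (hconn : G.Connected) (x z : V) :
    G.dist x z < Fintype.card V := by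
  obtain ⟨p, hp, hl⟩ := hconn.exists_path_of_dist x z
  rw [← hl]
  exact hp.length_lt

private lemma sphere_sum (hconn : G.Connected) (x : V) (f : ℕ → ℝ) :
    ∑ z : V, f (G.dist x z)
      = ∑ t ∈ Finset.range (Fintype.card V),
          ((Finset.univ.filter (fun z => G.dist x z = t)).card : ℝ) * f t := by
  rw [← Finset.sum_fiberwise_of_maps_to (g := fun z => G.dist x z)
    (fun z _ => Finset.mem_range.mpr (dist_lt_card hconn x z)) (fun z => f (G.dist x z))]
  refine Finset.sum_congr rfl fun t _ => ?_
  rw [Finset.sum_congr rfl (fun z hz => by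
    rw [(Finset.mem_filter.mp hz).2]), Finset.sum_const, nsmul_eq_mul]

private lemma low_card (x : V) (j : ℕ) :
    (Finset.univ.filter (fun z => G.dist x z < j)).card
      = ∑ t ∈ Finset.range j, (Finset.univ.filter (fun z => G.dist x z = t)).card := by
  induction j with
  | zero => simp
  | succ j ih =>
    rw [Finset.sum_range_succ, ← ih]
    rw [← Finset.card_union_of_disjoint (by
      simp only [Finset.disjoint_left, Finset.mem_filter]
      rintro a ⟨-, h1⟩ ⟨-, h2⟩
      omega)]
    congr 1
    ext z
    simp only [Finset.mem_union, Finset.mem_filter, Finset.mem_univ, true_and]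
    omega

private lemma far_card (x : V) (j : ℕ) :
    ((Finset.univ.filter (fun z => j ≤ G.dist x z)).card : ℝ)
      = (Fintype.card V : ℝ)
        - ∑ t ∈ Finset.range j, ((Finset.univ.filter (fun z => G.dist x z = t)).card : ℝ) := by
  have h := Finset.card_filter_add_card_filter_not
    (s := Finset.univ) (p := fun z => G.dist x z < j)
  have e : (Finset.univ.filter (fun z => ¬ G.dist x z < j))
      = Finset.univ.filter (fun z => j ≤ G.dist x z) := by
    ext z; simp [Nat.not_lt]
  rw [e] at h
  have h2 := low_card (G := G) x j
  have : ((Finset.univ.filter (fun z => j ≤ G.dist x z)).card : ℝ)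
      = (Fintype.card V : ℝ) - ((Finset.univ.filter (fun z => G.dist x z < j)).card : ℝ) := by
    rw [← Finset.card_univ]
    push_cast [← h]
    ring
  rw [this, h2]
  push_cast
  ring

end helpers2

section helpers3
variable {V : Type} [Fintype V] [DecidableEq V] {G : SimpleGraph V} [DecidableRel G.Adj]

private lemma double_count (σ : V → Fin 2) (c b : Fin 2 → ℕ → ℕ)
    (hc : ∀ (x y : V) (i : ℕ), G.dist x y = i →
      (Finset.univ.filter (fun z => G.dist x z = i - 1 ∧ G.Adj y z)).card = c (σ x) i)
    (hb : ∀ (x y : V) (i : ℕ), G.dist x y = i →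
      (Finset.univ.filter (fun z => G.dist x z = i + 1 ∧ G.Adj y z)).card = b (σ x) i)
    (kk : Fin 2 → ℕ → ℕ)
    (hkk : ∀ (x : V) (i : ℕ),
      (Finset.univ.filter (fun y => G.dist x y = i)).card = kk (σ x) i)
    (x : V) (d : ℕ) :
    kk (σ x) d * b (σ x) d = kk (σ x) (d + 1) * c (σ x) (d + 1) := by
  have inner1 : ∀ y' : V,
      (∑ z : V, if G.dist x y' = d ∧ G.dist x z = d + 1 ∧ G.Adj y' z then (1:ℕ) else 0)
        = if G.dist x y' = d then b (σ x) d else 0 := by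
    intro y'
    by_cases h : G.dist x y' = d
    · have hb' := hb x y' d h
      rw [Finset.card_filter] at hb'
      simp only [h, true_and, if_true]
      exact hb'
    · simp [h]
  have inner2 : ∀ z : V,
      (∑ y' : V, if G.dist x y' = d ∧ G.dist x z = d + 1 ∧ G.Adj y' z then (1:ℕ) else 0)
        = if G.dist x z = d + 1 then c (σ x) (d + 1) else 0 := by
    intro z
    by_cases h : G.dist x z = d + 1
    · have hc' := hc x z (d + 1) h
      rw [Finset.card_filter] at hc'
      simp only [Nat.add_sub_cancel] at hc'
      simp only [h, true_and, if_true]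
      rw [← hc']
      refine Finset.sum_congr rfl fun y' _ => ?_
      refine if_congr ?_ rfl rfl
      constructor
      · intro hh; exact ⟨hh.1, hh.2.symm⟩
      · intro hh; exact ⟨hh.1, hh.2.symm⟩
    · simp [h]
  have count1 : (∑ y' : V, ∑ z : V,
      if G.dist x y' = d ∧ G.dist x z = d + 1 ∧ G.Adj y' z then (1:ℕ) else 0)
        = kk (σ x) d * b (σ x) d := by
    simp only [inner1]
    rw [← Finset.sum_filter, Finset.sum_const, hkk x d, smul_eq_mul]
  have count2 : (∑ y' : V, ∑ z : V,
      if G.dist x y' = d ∧ G.dist x z = d + 1 ∧ G.Adj y' z then (1:ℕ) else 0)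
        = kk (σ x) (d + 1) * c (σ x) (d + 1) := by
    rw [Finset.sum_comm]
    simp only [inner2]
    rw [← Finset.sum_filter, Finset.sum_const, hkk x (d + 1), smul_eq_mul]
  rw [← count1, count2]

private lemma tail_small (hconn : G.Connected) (σ : V → Fin 2) (b : Fin 2 → ℕ → ℕ)
    (hb : ∀ (x y : V) (i : ℕ), G.dist x y = i →
      (Finset.univ.filter (fun z => G.dist x z = i + 1 ∧ G.Adj y z)).card = b (σ x) i)
    (x : V) (d : ℕ) (hbz : b (σ x) d = 0) :
    ∀ z : V, G.dist x z ≤ d := by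
  by_contra hcon
  push_neg at hcon
  have hne : (Finset.univ.filter (fun z => d < G.dist x z)).Nonempty := by
    obtain ⟨z, hz⟩ := hcon
    exact ⟨z, Finset.mem_filter.mpr ⟨Finset.mem_univ z, hz⟩⟩
  obtain ⟨z₀, hz₀mem, hz₀min⟩ := Finset.exists_min_image _ (fun z => G.dist x z) hne
  have hz₀ : d < G.dist x z₀ := (Finset.mem_filter.mp hz₀mem).2
  have hz₀x : z₀ ≠ x := by
    intro h; rw [h, SimpleGraph.dist_self] at hz₀; omega
  obtain ⟨w, hw, hwd⟩ := exists_pred hconn x z₀ hz₀x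
  have hcases : G.dist x w = d ∨ d < G.dist x w := by omega
  rcases hcases with hwle | hwgt
  · have h0 := hb x w d hwle
    rw [hbz] at h0
    have hmem : z₀ ∈ Finset.univ.filter (fun z => G.dist x z = d + 1 ∧ G.Adj w z) :=
      Finset.mem_filter.mpr ⟨Finset.mem_univ _, by omega, hw.symm⟩
    rw [Finset.card_eq_zero] at h0
    rw [h0] at hmem
    exact absurd hmem (Finset.notMem_empty z₀)
  · have hmem : w ∈ Finset.univ.filter (fun z => d < G.dist x z) :=
      Finset.mem_filter.mpr ⟨Finset.mem_univ _, hwgt⟩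
    have := hz₀min w hmem
    omega

end helpers3

section helpers4
variable {V : Type} [Fintype V] [DecidableEq V] {G : SimpleGraph V} [DecidableRel G.Adj]

private lemma qLap (hconn : G.Connected) (σ : V → Fin 2)
    (hbip : ∀ x y : V, G.Adj x y → σ x ≠ σ y)
    (c b : Fin 2 → ℕ → ℕ)
    (hc : ∀ (x y : V) (i : ℕ), G.dist x y = i →
      (Finset.univ.filter (fun z => G.dist x z = i - 1 ∧ G.Adj y z)).card = c (σ x) i)
    (hb : ∀ (x y : V) (i : ℕ), G.dist x y = i →
      (Finset.univ.filter (fun z => G.dist x z = i + 1 ∧ G.Adj y z)).card = b (σ x) i)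
    (kk : Fin 2 → ℕ → ℕ)
    (hkk : ∀ (x : V) (i : ℕ),
      (Finset.univ.filter (fun y => G.dist x y = i)).card = kk (σ x) i)
    (q : Fin 2 → ℕ → ℝ)
    (hq : ∀ (ℓ : Fin 2) (m : ℕ), q ℓ m = ∑ j ∈ Finset.Icc 1 m,
      ((Fintype.card V : ℝ) - ∑ t ∈ Finset.range j, (kk ℓ t : ℝ)) /
        ((kk ℓ j : ℝ) * (c ℓ j : ℝ))) :
    ∀ x y : V, y ≠ x →
      (G.degree y : ℝ) * q (σ x) (G.dist x y)
        - ∑ z ∈ G.neighborFinset y, q (σ x) (G.dist x z) = 1 := by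
  intro x y hyx
  have hd1 : 1 ≤ G.dist x y := hconn.pos_dist_of_ne (fun h => hyx h.symm)
  obtain ⟨m, hm⟩ : ∃ m, G.dist x y = m + 1 := ⟨G.dist x y - 1, by omega⟩
  have hA : (Finset.univ.filter (fun z => G.dist x z = m ∧ G.Adj y z)).card
      = c (σ x) (m+1) := by
    have := hc x y (m+1) hm
    simpa using this
  have hB : (Finset.univ.filter (fun z => G.dist x z = m + 2 ∧ G.Adj y z)).card
      = b (σ x) (m+1) := by
    have := hb x y (m+1) hm
    simpa using this
  have hsplit : G.neighborFinset y
      = Finset.univ.filter (fun z => G.dist x z = m ∧ G.Adj y z)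
        ∪ Finset.univ.filter (fun z => G.dist x z = m + 2 ∧ G.Adj y z) := by
    ext z
    simp only [SimpleGraph.mem_neighborFinset, Finset.mem_union, Finset.mem_filter,
      Finset.mem_univ, true_and]
    constructor
    · intro hz
      rcases adj_dist_step hconn σ hbip x y z hz with h | h
      · right; exact ⟨by omega, hz⟩
      · left; exact ⟨by omega, hz⟩
    · rintro (⟨-, hz⟩ | ⟨-, hz⟩) <;> exact hz
  have hdisj : Disjoint (Finset.univ.filter (fun z => G.dist x z = m ∧ G.Adj y z))
      (Finset.univ.filter (fun z => G.dist x z = m + 2 ∧ G.Adj y z)) := by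
    simp only [Finset.disjoint_left, Finset.mem_filter]
    rintro a ⟨-, h1, -⟩ ⟨-, h2, -⟩
    omega
  have hdeg : (G.degree y : ℝ) = (c (σ x) (m+1) : ℝ) + (b (σ x) (m+1) : ℝ) := by
    have : G.degree y = c (σ x) (m+1) + b (σ x) (m+1) := by
      rw [← SimpleGraph.card_neighborFinset_eq_degree, hsplit,
        Finset.card_union_of_disjoint hdisj, hA, hB]
    exact_mod_cast this
  have hsumN : ∑ z ∈ G.neighborFinset y, q (σ x) (G.dist x z)
      = (c (σ x) (m+1) : ℝ) * q (σ x) m + (b (σ x) (m+1) : ℝ) * q (σ x) (m+2) := by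
    rw [hsplit, Finset.sum_union hdisj]
    congr 1
    · rw [Finset.sum_congr rfl (fun z hz => by
        rw [(Finset.mem_filter.mp hz).2.1]), Finset.sum_const, nsmul_eq_mul, hA]
    · rw [Finset.sum_congr rfl (fun z hz => by
        rw [(Finset.mem_filter.mp hz).2.1]), Finset.sum_const, nsmul_eq_mul, hB]
  have hqs : ∀ j : ℕ, q (σ x) (j+1) = q (σ x) j +
      ((Fintype.card V : ℝ) - ∑ t ∈ Finset.range (j+1), (kk (σ x) t : ℝ)) /
        ((kk (σ x) (j+1) : ℝ) * (c (σ x) (j+1) : ℝ)) := by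
    intro j
    rw [hq (σ x) (j+1), hq (σ x) j, Finset.sum_Icc_succ_top (by omega : 1 ≤ j + 1)]
  have hkkpos : 0 < kk (σ x) (m+1) := by
    rw [← hkk x (m+1)]
    exact Finset.card_pos.mpr ⟨y, Finset.mem_filter.mpr ⟨Finset.mem_univ y, hm⟩⟩
  have hcpos : 0 < c (σ x) (m+1) := by
    rw [← hA]
    obtain ⟨w, hw, hwd⟩ := exists_pred hconn x y hyx
    exact Finset.card_pos.mpr ⟨w, Finset.mem_filter.mpr ⟨Finset.mem_univ w, by omega, hw⟩⟩
  have e1 : q (σ x) (m+1) = q (σ x) m +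
      ((Fintype.card V : ℝ) - ∑ t ∈ Finset.range (m+1), (kk (σ x) t : ℝ)) /
        ((kk (σ x) (m+1) : ℝ) * (c (σ x) (m+1) : ℝ)) := hqs m
  have e2 : q (σ x) (m+2) = q (σ x) (m+1) +
      ((Fintype.card V : ℝ) - ∑ t ∈ Finset.range (m+2), (kk (σ x) t : ℝ)) /
        ((kk (σ x) (m+2) : ℝ) * (c (σ x) (m+2) : ℝ)) := hqs (m+1)
  rw [hm, hsumN, hdeg, e2, e1]
  have hkkne : (kk (σ x) (m+1) : ℝ) ≠ 0 := by positivity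
  have hcne : (c (σ x) (m+1) : ℝ) ≠ 0 := by positivity
  by_cases hbz : b (σ x) (m+1) = 0
  · have hall := tail_small hconn σ b hb x (m+1) hbz
    have hf := far_card (G := G) x (m+1)
    simp only [hkk x] at hf
    have hfe : Finset.univ.filter (fun z => m + 1 ≤ G.dist x z)
        = Finset.univ.filter (fun z => G.dist x z = m + 1) := by
      ext z
      simp only [Finset.mem_filter, Finset.mem_univ, true_and]
      have := hall z
      omega
    rw [hfe, hkk x (m+1)] at hf
    rw [hbz, ← hf]
    push_cast
    field_simp
    ring
  · have hdc := double_count σ c b hc hb kk hkk x (m+1)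
    have hbne : (b (σ x) (m+1) : ℝ) ≠ 0 := Nat.cast_ne_zero.mpr hbz
    have hdc' : (kk (σ x) (m+2) : ℝ) * (c (σ x) (m+2) : ℝ)
        = (kk (σ x) (m+1) : ℝ) * (b (σ x) (m+1) : ℝ) := by
      exact_mod_cast hdc.symm
    rw [hdc']
    have hT : ∑ t ∈ Finset.range (m+2), (kk (σ x) t : ℝ)
        = ∑ t ∈ Finset.range (m+1), (kk (σ x) t : ℝ) + (kk (σ x) (m+1) : ℝ) :=
      Finset.sum_range_succ _ _
    rw [hT]
    field_simp
    ring
end helpers4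

theorem stmt11 {V : Type} [Fintype V] [DecidableEq V]
    (G : SimpleGraph V) [DecidableRel G.Adj]
    (hconn : G.Connected) (hcard : 2 ≤ Fintype.card V)
    (σ : V → Fin 2)
    (hbip : ∀ x y : V, G.Adj x y → σ x ≠ σ y)
    (k : Fin 2 → ℕ)
    (hdeg : ∀ x : V, G.degree x = k (σ x))
    (c b : Fin 2 → ℕ → ℕ)
    (hc : ∀ (x y : V) (i : ℕ), G.dist x y = i →
      (Finset.univ.filter (fun z => G.dist x z = i - 1 ∧ G.Adj y z)).card = c (σ x) i)
    (hb : ∀ (x y : V) (i : ℕ), G.dist x y = i →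
      (Finset.univ.filter (fun z => G.dist x z = i + 1 ∧ G.Adj y z)).card = b (σ x) i)
    (D : Fin 2 → ℕ)
    (hDub : ∀ x y : V, G.dist x y ≤ D (σ x))
    (hDmax : ∀ ℓ : Fin 2, ∃ x y : V, σ x = ℓ ∧ G.dist x y = D ℓ)
    (hD0 : 1 ≤ D 0) (hD01 : D 0 ≤ D 1)
    (kk : Fin 2 → ℕ → ℕ)
    (hkk : ∀ (x : V) (i : ℕ),
      (Finset.univ.filter (fun y => G.dist x y = i)).card = kk (σ x) i)
    (ν : V → V → ℝ)
    (hν0 : ∀ x : V, ν x x = 0)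
    (hνL : ∀ x y : V, y ≠ x →
      (G.degree y : ℝ) * ν x y - ∑ z ∈ G.neighborFinset y, ν x z = 1)
    (q : Fin 2 → ℕ → ℝ)
    (hq : ∀ (ℓ : Fin 2) (m : ℕ), q ℓ m = ∑ j ∈ Finset.Icc 1 m,
      ((Fintype.card V : ℝ) - ∑ t ∈ Finset.range j, (kk ℓ t : ℝ)) /
        ((kk ℓ j : ℝ) * (c ℓ j : ℝ))) :
    ∀ x y : V,
      (ν x y + ν y x) / (Fintype.card V : ℝ) =
        (2 / (Fintype.card V : ℝ)) * q (σ y) (G.dist x y) +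
        (((Fintype.card V : ℝ) - 1) / (Fintype.card V : ℝ)) *
          (1 / (k (σ x) : ℝ) - 1 / (k (σ y) : ℝ)) := by
  have hn2 : (2:ℝ) ≤ (Fintype.card V : ℝ) := by exact_mod_cast hcard
  have hnne : (Fintype.card V : ℝ) ≠ 0 := by linarith
  have hq0 : ∀ ℓ, q ℓ 0 = 0 := fun ℓ => by rw [hq]; simp
  -- Step 1: explicit formula for the equilibrium measure
  have key : ∀ u z : V, ν u z = q (σ u) (G.dist u z) := by
    intro u z
    set w : V → ℝ := fun z => ν u z - q (σ u) (G.dist u z) with hw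
    have hw1 : ∀ p : V, p ≠ u →
        (G.degree p : ℝ) * w p - ∑ r ∈ G.neighborFinset p, w r = 0 := by
      intro p hp
      have h1 := hνL u p hp
      have h2 := qLap hconn σ hbip c b hc hb kk hkk q hq u p hp
      simp only [hw]
      rw [Finset.sum_sub_distrib]
      have e : (G.degree p : ℝ) * (ν u p - q (σ u) (G.dist u p))
          - (∑ r ∈ G.neighborFinset p, ν u r - ∑ r ∈ G.neighborFinset p, q (σ u) (G.dist u r))
          = ((G.degree p : ℝ) * ν u p - ∑ r ∈ G.neighborFinset p, ν u r)
            - ((G.degree p : ℝ) * q (σ u) (G.dist u p)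
              - ∑ r ∈ G.neighborFinset p, q (σ u) (G.dist u r)) := by ring
      rw [e, h1, h2]
      ring
    have hwall : ∀ p : V,
        (G.degree p : ℝ) * w p - ∑ r ∈ G.neighborFinset p, w r = 0 := by
      intro p
      by_cases hp : p = u
      · subst hp
        have hs := lapsum (G := G) w
        rw [← Finset.add_sum_erase _ _ (Finset.mem_univ p)] at hs
        rw [Finset.sum_eq_zero (fun r hr => hw1 r (Finset.ne_of_mem_erase hr))] at hs
        linarith
      · exact hw1 p hp
    have hwc := harmonic_eq hconn w hwall z u
    have hwu : w u = 0 := by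
      simp only [hw, hν0 u, SimpleGraph.dist_self, hq0]
      ring
    have hz : w z = 0 := by rw [hwc, hwu]
    simp only [hw] at hz
    linarith
  -- Step 2: sums of equilibrium measures only depend on the color
  have hSν : ∀ u : V, ∑ z, ν u z
      = ∑ t ∈ Finset.range (Fintype.card V), (kk (σ u) t : ℝ) * q (σ u) t := by
    intro u
    rw [Finset.sum_congr rfl (fun z _ => key u z)]
    have := sphere_sum hconn u (q (σ u))
    simp only [hkk u] at this
    exact this
  -- Step 3: reciprocity
  have lapu : ∀ u : V, (G.degree u : ℝ) * ν u u - ∑ r ∈ G.neighborFinset u, ν u r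
      = 1 - (Fintype.card V : ℝ) := by
    intro u
    have hs := lapsum (G := G) (ν u)
    rw [← Finset.add_sum_erase _ _ (Finset.mem_univ u)] at hs
    rw [Finset.sum_congr rfl (fun r hr => hνL u r (Finset.ne_of_mem_erase hr))] at hs
    rw [Finset.sum_const, Finset.card_erase_of_mem (Finset.mem_univ u), Finset.card_univ,
      nsmul_eq_mul, mul_one] at hs
    have hc1 : ((Fintype.card V - 1 : ℕ) : ℝ) = (Fintype.card V : ℝ) - 1 := by
      have h1 : 1 ≤ Fintype.card V := by omega
      push_cast [Nat.cast_sub h1]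
      ring
    rw [hc1] at hs
    linarith
  have expand : ∀ u v : V,
      ∑ z, ν v z * ((G.degree z : ℝ) * ν u z - ∑ r ∈ G.neighborFinset z, ν u r)
        = (∑ z, ν v z) - (Fintype.card V : ℝ) * ν v u := by
    intro u v
    have e1 := (Finset.add_sum_erase Finset.univ
      (fun z => ν v z * ((G.degree z : ℝ) * ν u z - ∑ r ∈ G.neighborFinset z, ν u r))
      (Finset.mem_univ u)).symm
    have e2 := (Finset.add_sum_erase Finset.univ (fun z => ν v z) (Finset.mem_univ u)).symm
    rw [e1, e2, lapu u]
    rw [Finset.sum_congr rfl (fun r hr => by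
      rw [hνL u r (Finset.ne_of_mem_erase hr), mul_one])]
    ring
  have recip : ∀ u v : V,
      (∑ z, ν u z) - (Fintype.card V : ℝ) * ν u v
        = (∑ z, ν v z) - (Fintype.card V : ℝ) * ν v u := by
    intro u v
    have := lapsym (G := G) (ν v) (ν u)
    rw [expand u v, expand v u] at this
    linarith
  -- Step 4: q at distance 1 for colors with an adjacent representative
  have qone : ∀ a b₀ : V, G.Adj a b₀ →
      q (σ a) 1 = ((Fintype.card V : ℝ) - 1) / (k (σ a) : ℝ) ∧ (k (σ a) : ℝ) ≠ 0 := by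
    intro a b₀ hab
    have kk0 : kk (σ a) 0 = 1 := by
      rw [← hkk a 0]
      have : Finset.univ.filter (fun z => G.dist a z = 0) = {a} := by
        ext z
        simp only [Finset.mem_filter, Finset.mem_univ, true_and, Finset.mem_singleton]
        rw [hconn.dist_eq_zero_iff]
        exact eq_comm
      rw [this, Finset.card_singleton]
    have kk1 : kk (σ a) 1 = k (σ a) := by
      rw [← hkk a 1, ← hdeg a, ← SimpleGraph.card_neighborFinset_eq_degree]
      congr 1
      ext z
      simp [SimpleGraph.dist_eq_one_iff_adj, SimpleGraph.mem_neighborFinset]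
    have c1 : c (σ a) 1 = 1 := by
      rw [← hc a b₀ 1 (SimpleGraph.dist_eq_one_iff_adj.mpr hab)]
      have : Finset.univ.filter (fun z => G.dist a z = 1 - 1 ∧ G.Adj b₀ z) = {a} := by
        ext z
        simp only [Finset.mem_filter, Finset.mem_univ, true_and, Finset.mem_singleton,
          Nat.sub_self]
        constructor
        · intro hz
          exact (hconn.dist_eq_zero_iff.mp hz.1).symm
        · rintro rfl
          exact ⟨SimpleGraph.dist_self, hab.symm⟩
      rw [this, Finset.card_singleton]
    have kne : (k (σ a) : ℝ) ≠ 0 := by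
      have : 0 < G.degree a := by
        rw [← SimpleGraph.card_neighborFinset_eq_degree]
        exact Finset.card_pos.mpr ⟨b₀, (SimpleGraph.mem_neighborFinset _ _ _).mpr hab⟩
      rw [hdeg a] at this
      positivity
    refine ⟨?_, kne⟩
    rw [hq]
    rw [Finset.Icc_self, Finset.sum_singleton, Finset.range_one, Finset.sum_singleton,
      kk0, kk1, c1]
    push_cast
    rw [mul_one]
  -- Final assembly
  intro x y
  rw [key x y, key y x, SimpleGraph.dist_comm (u := y)]
  by_cases hσ : σ x = σ y
  · rw [hσ]
    field_simp
    ring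
  · have hxy : x ≠ y := fun h => hσ (by rw [h])
    obtain ⟨p, hp⟩ := hconn.exists_walk_length_eq_dist x y
    have hdpos : 0 < G.dist x y := hconn.pos_dist_of_ne hxy
    obtain ⟨w', hw'⟩ : ∃ w' : V, G.Adj x w' := by
      cases p with
      | nil => exact absurd rfl hxy
      | cons h p => exact ⟨_, h⟩
    have hσw : σ w' = σ y := fin2_aux3 (σ x) (σ w') (σ y) (hbip x w' hw') hσ
    -- two instances of reciprocity
    have r1 := recip x y
    have r2 := recip x w'
    rw [hSν x, hSν y, key x y, key y x, SimpleGraph.dist_comm (u := y)] at r1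
    rw [hSν x, hSν w', key x w', key w' x, SimpleGraph.dist_comm (u := w'), hσw] at r2
    rw [SimpleGraph.dist_eq_one_iff_adj.mpr hw'] at r2
    obtain ⟨qx1, hkxne⟩ := qone x w' hw'
    obtain ⟨qy1, hkyne⟩ := qone w' x hw'.symm
    rw [hσw] at qy1 hkyne
    have hdiff : q (σ x) (G.dist x y) = q (σ y) (G.dist x y)
        + (((Fintype.card V : ℝ) - 1) / (k (σ x) : ℝ)
          - ((Fintype.card V : ℝ) - 1) / (k (σ y) : ℝ)) := by
      rw [← qx1, ← qy1]
      have h := sub_eq_sub_iff_sub_eq_sub.mp r1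
      nlinarith [r1, r2, hnne]
    rw [hdiff]
    field_simp
    ring
end

section
/- Let Γ be a distance-biregular graph, ℓ ∈ {0,1}, and y ∈ V_ℓ. Then the capacity satisfies cap(y) = Σ_{x∈V} ν^y(x) = Σ_{j=1}^{D_ℓ} (n − B_{ℓ,j−1})² / (k_{ℓ,j}·c_{ℓ,j}). -/
/-!
Write `S_j` for the sum of `ν^y` over the sphere `Γ_j(y)`, `k_j = |Γ_j(y)|`, and
`T_j = n - B_{j-1}` for the number of vertices at distance at least `j` from `y`.
For `j ≥ 1` sum `L ν^y = 1` over these `T_j` vertices: all edges inside the set cancel, and only the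
edges between `Γ_{j-1}(y)` and `Γ_j(y)` remain: `c_j S_j - b_{j-1} S_{j-1} = T_j`.
Counting those edges gives `k_j c_j = k_{j-1} b_{j-1}`, so the sphere averages `S_j / k_j`
grow by `T_j / (k_j c_j)` from one sphere to the next, starting from `ν^y(y) = 0`. Hence
`cap(y) = ∑_j k_j (S_j / k_j) = ∑_j T_j · T_j / (k_j c_j)`.
-/

open Finset SimpleGraph

theorem Finset.sum_div_card_fiber_eq_sum {α β K : Type*} [DecidableEq β] [Semifield K]
    [CharZero K] (s : Finset α) (φ : α → β) (g : α → K) :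
    ∑ x ∈ s, (∑ z ∈ s with φ z = φ x, g z) / #{z ∈ s | φ z = φ x} = ∑ x ∈ s, g x := by
  rw [← sum_fiberwise_of_maps_to (fun x hx => mem_image_of_mem φ hx) g,
    ← sum_fiberwise_of_maps_to (fun x hx => mem_image_of_mem φ hx)]
  refine sum_congr rfl fun _ hb => ?_
  obtain ⟨x, hx, rfl⟩ := mem_image.mp hb
  have hpos : 0 < #{z ∈ s | φ z = φ x} := card_pos.mpr ⟨x, mem_filter.mpr ⟨hx, rfl⟩⟩
  rw [sum_congr rfl fun z hz => by rw [(mem_filter.mp hz).2], sum_const, nsmul_eq_mul,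
    mul_div_cancel₀ _ (by exact_mod_cast hpos.ne')]

theorem Finset.sum_sum_Icc_eq_sum_card_le_smul {α M : Type*} [AddCommMonoid M]
    (s : Finset α) (φ : α → ℕ) {D : ℕ} (hφ : ∀ x ∈ s, φ x ≤ D) (δ : ℕ → M) :
    ∑ x ∈ s, ∑ j ∈ Icc 1 (φ x), δ j = ∑ j ∈ Icc 1 D, #{x ∈ s | j ≤ φ x} • δ j := by
  rw [sum_comm' (t' := Icc 1 D) (s' := fun j => {x ∈ s | j ≤ φ x})]
  · simp only [sum_const]
  · intro x j
    simp only [mem_Icc, mem_filter]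
    constructor
    · rintro ⟨hx, h1, h2⟩
      exact ⟨⟨hx, h2⟩, h1, h2.trans (hφ x hx)⟩
    · rintro ⟨⟨hx, h2⟩, h1, -⟩
      exact ⟨hx, h1, h2⟩

namespace SimpleGraph

open Matrix

variable {V : Type*} {G : SimpleGraph V}

theorem exists_adj_dist_eq_of_dist_eq_succ {y x : V} {j : ℕ} (hx : G.dist y x = j + 1) :
    ∃ w, G.Adj x w ∧ G.dist y w = j := by
  have hxy : x ≠ y := by rintro rfl; simp at hx
  obtain ⟨p, hp⟩ :=
    (Reachable.of_dist_ne_zero (by omega : G.dist y x ≠ 0)).symm.exists_walk_length_eq_dist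
  cases p with
  | nil => exact absurd rfl hxy
  | cons hadj q =>
    refine ⟨_, hadj, ?_⟩
    have hq : G.dist y _ ≤ q.length := dist_comm (G := G) ▸ dist_le q
    rw [Walk.length_cons, dist_comm, hx] at hp
    rcases hadj.diff_dist_adj (u := y) with h | h | h <;> omega

variable [Fintype V]

variable (G) in
noncomputable def sphere (y : V) (i : ℕ) : Finset V := {x | G.dist y x = i}

@[simp]
theorem mem_sphere {y x : V} {i : ℕ} : x ∈ G.sphere y i ↔ G.dist y x = i := by
  simp [sphere]

theorem Connected.sphere_zero [DecidableEq V] (hconn : G.Connected) (y : V) :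
    G.sphere y 0 = {y} := by
  ext x
  rw [mem_sphere, hconn.dist_eq_zero_iff, mem_singleton, eq_comm]

theorem card_le_dist_add_sum_card_sphere (y : V) (j : ℕ) :
    #{x | j ≤ G.dist y x} + ∑ t ∈ range j, #(G.sphere y t) = Fintype.card V := by
  have hnear : #{x | ¬ j ≤ G.dist y x} = ∑ t ∈ range j, #(G.sphere y t) := by
    rw [card_eq_sum_card_fiberwise (f := G.dist y) (t := range j) (by intro x; simp)]
    refine sum_congr rfl fun t ht => congrArg _ ?_
    ext x
    simp only [mem_filter, mem_univ, true_and, mem_sphere, not_le, and_iff_right_iff_imp]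
    rw [mem_range] at ht
    omega
  rw [← hnear, card_filter_add_card_filter_not, card_univ]

variable [DecidableRel G.Adj]

variable (G) in
structure HasIntersectionNumbers (y : V) (c b : ℕ → ℕ) : Prop where
  card_adj_dist_sub_one (z : V) :
    #{w ∈ G.neighborFinset z | G.dist y w = G.dist y z - 1} = c (G.dist y z)
  card_adj_dist_add_one (z : V) :
    #{w ∈ G.neighborFinset z | G.dist y w = G.dist y z + 1} = b (G.dist y z)

variable {y : V} {c b : ℕ → ℕ}

theorem HasIntersectionNumbers.card_adj_dist_pred (h : G.HasIntersectionNumbers y c b) {x : V}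
    {j : ℕ} (hx : G.dist y x = j + 1) :
    #{z ∈ G.neighborFinset x | G.dist y z = j} = c (j + 1) := by
  simpa only [hx, Nat.add_sub_cancel] using h.card_adj_dist_sub_one x

theorem HasIntersectionNumbers.card_adj_dist_succ (h : G.HasIntersectionNumbers y c b) {z : V}
    {j : ℕ} (hz : G.dist y z = j) :
    #{x ∈ G.neighborFinset z | G.dist y x = j + 1} = b j := by
  simpa only [hz] using h.card_adj_dist_add_one z

variable (G) in
theorem sum_sphere_succ_sum_adj {M : Type*} [AddCommMonoid M] (y : V) (j : ℕ) (g : V → M) :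
    ∑ x ∈ G.sphere y (j + 1), ∑ z ∈ G.neighborFinset x with G.dist y z = j, g z =
      ∑ z ∈ G.sphere y j, #{x ∈ G.neighborFinset z | G.dist y x = j + 1} • g z := by
  rw [sum_comm' (t' := G.sphere y j)
    (s' := fun z => {x ∈ G.neighborFinset z | G.dist y x = j + 1})]
  · simp only [sum_const]
  · intro x z
    simp only [mem_filter, mem_sphere, mem_neighborFinset, G.adj_comm x z]
    tauto

theorem HasIntersectionNumbers.card_sphere_succ_mul (h : G.HasIntersectionNumbers y c b)
    (j : ℕ) : #(G.sphere y (j + 1)) * c (j + 1) = #(G.sphere y j) * b j := by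
  have hdouble := G.sum_sphere_succ_sum_adj y j (fun _ => 1)
  simp only [sum_const, smul_eq_mul, mul_one] at hdouble
  rwa [sum_congr rfl fun x hx => h.card_adj_dist_pred (mem_sphere.mp hx),
    sum_congr rfl fun z hz => h.card_adj_dist_succ (mem_sphere.mp hz), sum_const, sum_const,
    smul_eq_mul, smul_eq_mul] at hdouble

variable [DecidableEq V]

variable (G) in
theorem sum_lapMatrix_mulVec_eq_sum_boundary {R : Type*} [NonAssocRing R] (U : Finset V)
    (f : V → R) :
    ∑ x ∈ U, (G.lapMatrix R *ᵥ f) x =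
      ∑ x ∈ U, ∑ z ∈ G.neighborFinset x with z ∉ U, (f x - f z) := by
  have hlap (x : V) : (G.lapMatrix R *ᵥ f) x = ∑ z ∈ G.neighborFinset x, (f x - f z) := by
    rw [lapMatrix_mulVec_apply, sum_sub_distrib, sum_const, card_neighborFinset_eq_degree,
      nsmul_eq_mul]
  -- each edge inside `U` is counted once in each direction, with opposite signs
  have hinner : ∑ x ∈ U, ∑ z ∈ G.neighborFinset x with z ∈ U, (f x - f z) = 0 := by
    simp only [sum_sub_distrib]
    rw [sub_eq_zero]
    refine sum_comm' fun x z => ?_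
    simp only [mem_filter, mem_neighborFinset, G.adj_comm x z]
    tauto
  calc ∑ x ∈ U, (G.lapMatrix R *ᵥ f) x
      = ∑ x ∈ U, (∑ z ∈ G.neighborFinset x with z ∈ U, (f x - f z) +
          ∑ z ∈ G.neighborFinset x with z ∉ U, (f x - f z)) :=
        sum_congr rfl fun x _ => by rw [hlap, sum_filter_add_sum_filter_not]
    _ = _ := by rw [sum_add_distrib, hinner, zero_add]

variable (G) in
theorem sum_far_sum_adj_near {M : Type*} [AddCommMonoid M] (y : V) (j : ℕ) (g : V → V → M) :
    ∑ x ∈ {x | j + 1 ≤ G.dist y x}, ∑ z ∈ G.neighborFinset x with ¬ j + 1 ≤ G.dist y z, g x z =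
      ∑ x ∈ G.sphere y (j + 1), ∑ z ∈ G.neighborFinset x with G.dist y z = j, g x z := by
  have hstep {x z : V} (hxz : G.Adj x z) := hxz.diff_dist_adj (u := y)
  symm
  refine sum_subset_zero_on_sdiff (fun x hx => by simp_all) (fun x hx => ?_) fun x hx => ?_
  · simp only [mem_sdiff, mem_filter, mem_univ, true_and, mem_sphere] at hx
    refine sum_eq_zero fun z hz => ?_
    simp only [mem_filter, mem_neighborFinset] at hz
    have := hstep hz.1
    omega
  · refine sum_congr (filter_congr fun z hz => ?_) fun _ _ => rfl
    have := hstep ((mem_neighborFinset ..).mp hz)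
    rw [mem_sphere] at hx
    omega

theorem sum_sphere_succ_sum_adj_sub_eq_card {f : V → ℝ}
    (hf : ∀ x, x ≠ y → (G.lapMatrix ℝ *ᵥ f) x = 1) (j : ℕ) :
    ∑ x ∈ G.sphere y (j + 1), ∑ z ∈ G.neighborFinset x with G.dist y z = j, (f x - f z) =
      #{x | j + 1 ≤ G.dist y x} := by
  have hcut := G.sum_lapMatrix_mulVec_eq_sum_boundary {x | j + 1 ≤ G.dist y x} f
  simp only [mem_filter, mem_univ, true_and] at hcut
  rw [← sum_far_sum_adj_near, ← hcut, sum_congr rfl fun x hx => hf x ?_, sum_const, nsmul_one]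
  rintro rfl
  simp at hx

theorem HasIntersectionNumbers.mul_sum_sphere_succ_sub_mul_sum_sphere
    (h : G.HasIntersectionNumbers y c b) {f : V → ℝ}
    (hf : ∀ x, x ≠ y → (G.lapMatrix ℝ *ᵥ f) x = 1) (j : ℕ) :
    c (j + 1) * ∑ x ∈ G.sphere y (j + 1), f x - b j * ∑ z ∈ G.sphere y j, f z =
      #{x | j + 1 ≤ G.dist y x} := by
  rw [← sum_sphere_succ_sum_adj_sub_eq_card hf]
  simp only [sum_sub_distrib, sum_const, sum_sphere_succ_sum_adj, nsmul_eq_mul, mul_sum]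
  congr 1
  · exact sum_congr rfl fun x hx => by rw [h.card_adj_dist_pred (mem_sphere.mp hx)]
  · exact sum_congr rfl fun z hz => by rw [h.card_adj_dist_succ (mem_sphere.mp hz)]

theorem HasIntersectionNumbers.sum_sphere_succ_div_card_eq (h : G.HasIntersectionNumbers y c b)
    {f : V → ℝ} (hf : ∀ x, x ≠ y → (G.lapMatrix ℝ *ᵥ f) x = 1) {x : V} {j : ℕ}
    (hx : G.dist y x = j + 1) :
    (∑ z ∈ G.sphere y (j + 1), f z) / #(G.sphere y (j + 1)) =
      (∑ z ∈ G.sphere y j, f z) / #(G.sphere y j) +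
        #{z | j + 1 ≤ G.dist y z} / (#(G.sphere y (j + 1)) * c (j + 1)) := by
  obtain ⟨w, hxw, hw⟩ := exists_adj_dist_eq_of_dist_eq_succ hx
  have hk : (#(G.sphere y (j + 1)) : ℝ) ≠ 0 := by
    exact_mod_cast card_ne_zero_of_mem (mem_sphere.mpr hx)
  have hk' : (#(G.sphere y j) : ℝ) ≠ 0 := by
    exact_mod_cast card_ne_zero_of_mem (mem_sphere.mpr hw)
  have hc : (c (j + 1) : ℝ) ≠ 0 := by
    rw [← h.card_adj_dist_pred hx]
    exact_mod_cast card_ne_zero_of_mem (mem_filter.mpr ⟨(mem_neighborFinset ..).mpr hxw, hw⟩)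
  have hedge : (#(G.sphere y (j + 1)) : ℝ) * c (j + 1) = #(G.sphere y j) * b j := by
    exact_mod_cast h.card_sphere_succ_mul j
  have hflux := h.mul_sum_sphere_succ_sub_mul_sum_sphere hf j
  field_simp
  linear_combination (#(G.sphere y j) : ℝ) * hflux - (∑ z ∈ G.sphere y j, f z) * hedge

theorem HasIntersectionNumbers.sum_sphere_div_card_eq_sum (h : G.HasIntersectionNumbers y c b)
    (hconn : G.Connected) {f : V → ℝ} (hf0 : f y = 0)
    (hf : ∀ x, x ≠ y → (G.lapMatrix ℝ *ᵥ f) x = 1) {x : V} {i : ℕ} (hx : G.dist y x = i) :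
    (∑ z ∈ G.sphere y i, f z) / #(G.sphere y i) =
      ∑ j ∈ Icc 1 i, (#{z | j ≤ G.dist y z} : ℝ) / (#(G.sphere y j) * c j) := by
  induction i generalizing x with
  | zero => simp [hconn.sphere_zero, hf0]
  | succ i ih =>
    obtain ⟨w, -, hw⟩ := exists_adj_dist_eq_of_dist_eq_succ hx
    rw [h.sum_sphere_succ_div_card_eq hf hx, ih hw, sum_Icc_succ_top (by omega)]

theorem HasIntersectionNumbers.sum_eq_sum_sq_div (h : G.HasIntersectionNumbers y c b)
    (hconn : G.Connected) {D : ℕ} (hD : ∀ x, G.dist y x ≤ D) {f : V → ℝ} (hf0 : f y = 0)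
    (hf : ∀ x, x ≠ y → (G.lapMatrix ℝ *ᵥ f) x = 1) :
    ∑ x, f x = ∑ j ∈ Icc 1 D,
      ((Fintype.card V : ℝ) - ∑ t ∈ range j, (#(G.sphere y t) : ℝ)) ^ 2 /
        (#(G.sphere y j) * c j) := by
  have hfar (j : ℕ) : (#{z | j ≤ G.dist y z} : ℝ) =
      Fintype.card V - ∑ t ∈ range j, (#(G.sphere y t) : ℝ) := by
    rw [← card_le_dist_add_sum_card_sphere y j]
    push_cast
    ring
  calc ∑ x, f x
      = ∑ x, (∑ z ∈ G.sphere y (G.dist y x), f z) / #(G.sphere y (G.dist y x)) :=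
        (sum_div_card_fiber_eq_sum univ (G.dist y) f).symm
    _ = ∑ x, ∑ j ∈ Icc 1 (G.dist y x),
          (#{z | j ≤ G.dist y z} : ℝ) / (#(G.sphere y j) * c j) :=
        sum_congr rfl fun x _ => h.sum_sphere_div_card_eq_sum hconn hf0 hf rfl
    _ = ∑ j ∈ Icc 1 D, #{x | j ≤ G.dist y x} •
          ((#{z | j ≤ G.dist y z} : ℝ) / (#(G.sphere y j) * c j)) :=
        sum_sum_Icc_eq_sum_card_le_smul univ (G.dist y) (fun x _ => hD x) _
    _ = _ := sum_congr rfl fun j _ => by rw [nsmul_eq_mul, ← mul_div_assoc, ← sq, hfar]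

end SimpleGraph

theorem stmt12_general {V : Type} [Fintype V] [DecidableEq V]
    (G : SimpleGraph V) [DecidableRel G.Adj]
    (hconn : G.Connected)
    (σ : V → Fin 2)
    (c b : Fin 2 → ℕ → ℕ)
    (hc : ∀ (x y : V) (i : ℕ), G.dist x y = i →
      (Finset.univ.filter (fun z => G.dist x z = i - 1 ∧ G.Adj y z)).card = c (σ x) i)
    (hb : ∀ (x y : V) (i : ℕ), G.dist x y = i →
      (Finset.univ.filter (fun z => G.dist x z = i + 1 ∧ G.Adj y z)).card = b (σ x) i)
    (D : Fin 2 → ℕ)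
    (hDub : ∀ x y : V, G.dist x y ≤ D (σ x))
    (kk : Fin 2 → ℕ → ℕ)
    (hkk : ∀ (x : V) (i : ℕ),
      (Finset.univ.filter (fun y => G.dist x y = i)).card = kk (σ x) i)
    (ν : V → V → ℝ)
    (hν0 : ∀ x : V, ν x x = 0)
    (hνL : ∀ x y : V, y ≠ x →
      (G.degree y : ℝ) * ν x y - ∑ z ∈ G.neighborFinset y, ν x z = 1) :
    ∀ y : V,
      ∑ x : V, ν y x = ∑ j ∈ Finset.Icc 1 (D (σ y)),
        ((Fintype.card V : ℝ) - ∑ t ∈ Finset.range j, (kk (σ y) t : ℝ)) ^ 2 /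
          ((kk (σ y) j : ℝ) * (c (σ y) j : ℝ)) := by
  intro y
  have hcount {z : V} {p : V → Prop} [DecidablePred p] :
      #{w ∈ G.neighborFinset z | p w} = #{w | p w ∧ G.Adj z w} := by
    rw [neighborFinset_eq_filter, filter_filter]
    simp only [and_comm]
  have hint : G.HasIntersectionNumbers y (c (σ y)) (b (σ y)) :=
    ⟨fun z => hcount.trans (hc y z _ rfl), fun z => hcount.trans (hb y z _ rfl)⟩
  have hf (x : V) (hx : x ≠ y) : (G.lapMatrix ℝ).mulVec (ν y) x = 1 := by
    rw [lapMatrix_mulVec_apply]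
    exact hνL y x hx
  have hsphere (i : ℕ) : #(G.sphere y i) = kk (σ y) i := hkk y i
  simpa only [hsphere] using hint.sum_eq_sum_sq_div hconn (hDub y) (hν0 y) hf

theorem stmt12 {V : Type} [Fintype V] [DecidableEq V]
    (G : SimpleGraph V) [DecidableRel G.Adj]
    (hconn : G.Connected) (hcard : 2 ≤ Fintype.card V)
    (σ : V → Fin 2)
    (hbip : ∀ x y : V, G.Adj x y → σ x ≠ σ y)
    (k : Fin 2 → ℕ)
    (hdeg : ∀ x : V, G.degree x = k (σ x))
    (c b : Fin 2 → ℕ → ℕ)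
    (hc : ∀ (x y : V) (i : ℕ), G.dist x y = i →
      (Finset.univ.filter (fun z => G.dist x z = i - 1 ∧ G.Adj y z)).card = c (σ x) i)
    (hb : ∀ (x y : V) (i : ℕ), G.dist x y = i →
      (Finset.univ.filter (fun z => G.dist x z = i + 1 ∧ G.Adj y z)).card = b (σ x) i)
    (D : Fin 2 → ℕ)
    (hDub : ∀ x y : V, G.dist x y ≤ D (σ x))
    (hDmax : ∀ ℓ : Fin 2, ∃ x y : V, σ x = ℓ ∧ G.dist x y = D ℓ)
    (hD0 : 1 ≤ D 0) (hD01 : D 0 ≤ D 1)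
    (kk : Fin 2 → ℕ → ℕ)
    (hkk : ∀ (x : V) (i : ℕ),
      (Finset.univ.filter (fun y => G.dist x y = i)).card = kk (σ x) i)
    (ν : V → V → ℝ)
    (hν0 : ∀ x : V, ν x x = 0)
    (hνL : ∀ x y : V, y ≠ x →
      (G.degree y : ℝ) * ν x y - ∑ z ∈ G.neighborFinset y, ν x z = 1) :
    ∀ y : V,
      ∑ x : V, ν y x = ∑ j ∈ Finset.Icc 1 (D (σ y)),
        ((Fintype.card V : ℝ) - ∑ t ∈ Finset.range j, (kk (σ y) t : ℝ)) ^ 2 /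
          ((kk (σ y) j : ℝ) * (c (σ y) j : ℝ)) :=
  stmt12_general G hconn σ c b hc hb D hDub kk hkk ν hν0 hνL
end
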